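/- Let Φ ≢ 0 be a Bernstein function and define Φ*(s) = s/Φ(s) for s > 0 (extended by continuity at 0). If Φ* is also a Bernstein function (symmetry case), then the perpetuity associated to Φ has the same law as the remainder associated to Φ*, and the remainder associated to Φ has the same law as the perpetuity associated to Φ*. -/

import Mathlib

/-!
Since `r / Φ(r) = Φ*(r)` and `r / Φ*(r) = Φ(r)`, the Mellin transforms of `I_Φ` and `R_{Φ*}` obey
the same recursion `m(r + 1) = Φ*(r) m(r)`, and those of `R_Φ` and `I_{Φ*}` the same recursion
`m(r + 1) = Φ(r) m(r)`. At the integers such a recursion, with `m(1) = 1`, fixes every moment: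
`E[X^n] = c(1) ⋯ c(n)`. A Bernstein function grows at most linearly, so `E[X^n] ≤ n! Cⁿ` and
`E[exp(tX)] < ∞` for `t < 1/C`. The complex moment generating function is then analytic on a
vertical strip containing the imaginary axis, where it is determined by its Taylor coefficients at
`0`, i.e. by the moments; on the imaginary axis it is the characteristic function, which determines
the law.
-/

open MeasureTheory Real Set Filter

/-- A Bernstein function, null at 0: `Φ s = a s + ∫ (1 - exp (-s x)) λ(dx)`
with `a ≥ 0` and `λ` a measure on `(0,∞)` with `∫ (x ∧ 1) λ(dx) < ∞`. -/
def IsBernstein (Φ : ℝ → ℝ) : Prop :=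
  ∃ (a : ℝ) (lam : Measure ℝ), 0 ≤ a ∧ lam (Iic 0) = 0 ∧
    (∫⁻ x, ENNReal.ofReal (min x 1) ∂lam) < ⊤ ∧
    ∀ s ≥ (0 : ℝ), Φ s = a * s + ∫ x, (1 - Real.exp (-s * x)) ∂lam

/-- A subordinator (increasing Lévy process started at 0) with
Laplace–Bernstein exponent `Φ`: stationary independent increments and
`E[exp (-s ξ_l)] = exp (-l Φ(s))`. -/
structure IsSubordinator {Ω : Type*} [MeasurableSpace Ω] (P : Measure Ω)
    (ξ : ℝ → Ω → ℝ) (Φ : ℝ → ℝ) : Prop where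
  isProb : IsProbabilityMeasure P
  meas : ∀ l, Measurable (ξ l)
  zero : ∀ᵐ ω ∂P, ξ 0 ω = 0
  mono : ∀ᵐ ω ∂P, MonotoneOn (fun l => ξ l ω) (Ici 0)
  indep : ∀ (n : ℕ) (t : Fin (n + 1) → ℝ), (∀ i, 0 ≤ t i) → Monotone t →
    ProbabilityTheory.iIndepFun
      (fun i : Fin n => fun ω => ξ (t i.succ) ω - ξ (t i.castSucc) ω) P
  laplace : ∀ t ≥ (0 : ℝ), ∀ l ≥ (0 : ℝ), ∀ s ≥ (0 : ℝ),
    ∫ ω, Real.exp (-s * (ξ (t + l) ω - ξ t ω)) ∂P = Real.exp (-l * Φ s)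

/-- The perpetuity `I = ∫₀^∞ exp (-ξ_l) dl` of a subordinator. -/
noncomputable def perpetuity {Ω : Type*} (ξ : ℝ → Ω → ℝ) (ω : Ω) : ℝ :=
  ∫ l in Ioi (0 : ℝ), Real.exp (-ξ l ω)

/-- The Mellin transform `r ↦ E[X^(r-1)]` of a positive random variable. -/
noncomputable def mellinT {Ω : Type*} [MeasurableSpace Ω] (P : Measure Ω)
    (X : Ω → ℝ) (r : ℝ) : ℝ := ∫ ω, X ω ^ (r - 1) ∂P

open ProbabilityTheory Topology
open scoped Nat

lemma one_sub_exp_neg_mul_le {s x : ℝ} (hx : 0 ≤ x) :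
    1 - exp (-s * x) ≤ max s 1 * min x 1 := by
  have hlin : 1 - exp (-s * x) ≤ s * x := by linarith [add_one_le_exp (-s * x)]
  have hone : 1 - exp (-s * x) ≤ 1 := by linarith [exp_pos (-s * x)]
  rcases le_total x 1 with hx1 | hx1
  · rw [min_eq_left hx1]
    exact hlin.trans (mul_le_mul_of_nonneg_right (le_max_left _ _) hx)
  · rw [min_eq_right hx1, mul_one]
    exact hone.trans (le_max_right _ _)

lemma one_sub_exp_neg_mul_nonneg {s x : ℝ} (hs : 0 ≤ s) (hx : 0 ≤ x) :
    0 ≤ 1 - exp (-s * x) := by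
  rw [sub_nonneg, exp_le_one_iff]
  nlinarith

lemma one_sub_exp_neg_mul_pos {s x : ℝ} (hs : 0 < s) (hx : 0 < x) : 0 < 1 - exp (-s * x) := by
  rw [sub_pos, exp_lt_one_iff]
  nlinarith

section LevyMeasure

variable {lam : Measure ℝ}

lemma ae_pos_of_measure_Iic_eq_zero (h0 : lam (Iic 0) = 0) : ∀ᵐ x ∂lam, 0 < x := by
  rwa [ae_iff, show {x : ℝ | ¬0 < x} = Iic 0 from ext fun _ => not_lt]

lemma integrable_min_one (h0 : lam (Iic 0) = 0)
    (hfin : (∫⁻ x, ENNReal.ofReal (min x 1) ∂lam) < ⊤) :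
    Integrable (fun x => min x 1) lam :=
  ⟨by fun_prop, (hasFiniteIntegral_iff_ofReal <| (ae_pos_of_measure_Iic_eq_zero h0).mono
    fun _ hx => le_min hx.le zero_le_one).2 hfin⟩

lemma integral_one_sub_exp_neg_mul_le (h0 : lam (Iic 0) = 0)
    (hfin : (∫⁻ x, ENNReal.ofReal (min x 1) ∂lam) < ⊤) {s : ℝ} (hs : 0 ≤ s) :
    ∫ x, (1 - exp (-s * x)) ∂lam ≤ max s 1 * ∫ x, min x 1 ∂lam := by
  rw [← integral_const_mul]
  refine integral_mono_of_nonneg ?_ ((integrable_min_one h0 hfin).const_mul _) ?_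
  · filter_upwards [ae_pos_of_measure_Iic_eq_zero h0] with x hx
    exact one_sub_exp_neg_mul_nonneg hs hx.le
  · filter_upwards [ae_pos_of_measure_Iic_eq_zero h0] with x hx
    exact one_sub_exp_neg_mul_le hx.le

lemma integrable_one_sub_exp_neg_mul (h0 : lam (Iic 0) = 0)
    (hfin : (∫⁻ x, ENNReal.ofReal (min x 1) ∂lam) < ⊤) {s : ℝ} (hs : 0 ≤ s) :
    Integrable (fun x => 1 - exp (-s * x)) lam := by
  refine ((integrable_min_one h0 hfin).const_mul (max s 1)).mono' (by fun_prop) ?_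
  filter_upwards [ae_pos_of_measure_Iic_eq_zero h0] with x hx
  rw [norm_of_nonneg (one_sub_exp_neg_mul_nonneg hs hx.le)]
  exact one_sub_exp_neg_mul_le hx.le

lemma eq_zero_of_integral_one_sub_exp_neg_mul_eq_zero (h0 : lam (Iic 0) = 0)
    (hfin : (∫⁻ x, ENNReal.ofReal (min x 1) ∂lam) < ⊤) {s : ℝ} (hs : 0 < s)
    (h : ∫ x, (1 - exp (-s * x)) ∂lam = 0) : lam = 0 := by
  have hpos := ae_pos_of_measure_Iic_eq_zero h0
  have hzero := (integral_eq_zero_iff_of_nonneg_ae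
    (hpos.mono fun x hx => one_sub_exp_neg_mul_nonneg hs.le hx.le)
    (integrable_one_sub_exp_neg_mul h0 hfin hs.le)).1 h
  rw [← ae_eq_bot, ← eventually_false_iff_eq_bot]
  filter_upwards [hpos, hzero] with x hx hx0
  exact (one_sub_exp_neg_mul_pos hs hx).ne' hx0

end LevyMeasure

namespace IsBernstein

variable {Ψ : ℝ → ℝ}

lemma pos (hΨ : IsBernstein Ψ) (hne : ∃ s > (0 : ℝ), Ψ s ≠ 0) {r : ℝ} (hr : 0 < r) :
    0 < Ψ r := by
  obtain ⟨a, lam, ha, h0, hfin, hrep⟩ := hΨ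
  obtain ⟨s, hs, hΨs⟩ := hne
  have hdrift : 0 ≤ a * r := mul_nonneg ha hr.le
  have hjump : 0 ≤ ∫ x, (1 - exp (-r * x)) ∂lam := integral_nonneg_of_ae <|
    (ae_pos_of_measure_Iic_eq_zero h0).mono fun x hx => one_sub_exp_neg_mul_nonneg hr.le hx.le
  by_contra! hle
  rw [hrep r hr.le] at hle
  have ha0 : a = 0 := (mul_eq_zero.1 (by linarith)).resolve_right hr.ne'
  have hlam : lam = 0 := eq_zero_of_integral_one_sub_exp_neg_mul_eq_zero h0 hfin hr (by linarith)
  exact hΨs (by simp [hrep s hs.le, ha0, hlam])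

lemma exists_le_mul (hΨ : IsBernstein Ψ) : ∃ C : ℝ, ∀ s ≥ (1 : ℝ), Ψ s ≤ C * s := by
  obtain ⟨a, lam, -, h0, hfin, hrep⟩ := hΨ
  refine ⟨a + ∫ x, min x 1 ∂lam, fun s hs => ?_⟩
  have hjump := integral_one_sub_exp_neg_mul_le h0 hfin (zero_le_one.trans hs)
  rw [max_eq_left hs] at hjump
  rw [hrep s (zero_le_one.trans hs)]
  linarith

end IsBernstein

section Moments

variable {Ω : Type*} [MeasurableSpace Ω] {P : Measure Ω} {X : Ω → ℝ}

lemma lintegral_exp_mul_eq_tsum (hX : AEMeasurable X P) (hX0 : ∀ᵐ ω ∂P, 0 ≤ X ω)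
    (hint : ∀ n : ℕ, Integrable (fun ω => X ω ^ n) P) {t : ℝ} (ht : 0 ≤ t) :
    ∫⁻ ω, ENNReal.ofReal (exp (t * X ω)) ∂P
      = ∑' n : ℕ, ENNReal.ofReal (t ^ n * P[fun ω => X ω ^ n] / n !) := by
  have hseries : ∀ᵐ ω ∂P, ENNReal.ofReal (exp (t * X ω))
      = ∑' n : ℕ, ENNReal.ofReal ((t * X ω) ^ n / n !) := by
    filter_upwards [hX0] with ω hω
    have hs : HasSum (fun n : ℕ => (t * X ω) ^ n / n !) (exp (t * X ω)) := by
      rw [exp_eq_exp_ℝ]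
      exact NormedSpace.expSeries_div_hasSum_exp _
    rw [← hs.tsum_eq, ENNReal.ofReal_tsum_of_nonneg (fun n => by positivity) hs.summable]
  rw [lintegral_congr_ae hseries, lintegral_tsum fun n => by fun_prop]
  refine tsum_congr fun n => ?_
  rw [← integral_const_mul, ← integral_div, ofReal_integral_eq_lintegral_ofReal]
  · simp only [mul_pow]
  · exact ((hint n).const_mul _).div_const _
  · filter_upwards [hX0] with ω hω
    positivity

lemma integrable_exp_mul_of_moment_le (hX : AEMeasurable X P) (hX0 : ∀ᵐ ω ∂P, 0 ≤ X ω)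
    (hint : ∀ n : ℕ, Integrable (fun ω => X ω ^ n) P) {C : ℝ} (hC : 0 ≤ C)
    (hmom : ∀ n : ℕ, P[fun ω => X ω ^ n] ≤ n ! * C ^ n) {t : ℝ} (ht : 0 ≤ t) (htC : t * C < 1) :
    Integrable (fun ω => exp (t * X ω)) P := by
  refine ⟨by fun_prop, ?_⟩
  rw [hasFiniteIntegral_iff_ofReal (ae_of_all _ fun ω => (exp_pos _).le),
    lintegral_exp_mul_eq_tsum hX hX0 hint ht]
  have hgeom : Summable fun n : ℕ => (t * C) ^ n :=
    summable_geometric_of_lt_one (by positivity) htC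
  calc ∑' n : ℕ, ENNReal.ofReal (t ^ n * P[fun ω => X ω ^ n] / n !)
      ≤ ∑' n : ℕ, ENNReal.ofReal ((t * C) ^ n) := by
        refine ENNReal.tsum_le_tsum fun n => ENNReal.ofReal_le_ofReal ?_
        rw [div_le_iff₀ (by positivity), mul_pow]
        calc t ^ n * P[fun ω => X ω ^ n] ≤ t ^ n * (n ! * C ^ n) := by gcongr; exact hmom n
          _ = t ^ n * C ^ n * n ! := by ring
    _ < ⊤ := by
        rw [← ENNReal.ofReal_tsum_of_nonneg (fun n => by positivity) hgeom]
        exact ENNReal.ofReal_lt_top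

lemma zero_mem_interior_integrableExpSet_of_moment_le [IsFiniteMeasure P]
    (hX : AEMeasurable X P) (hX0 : ∀ᵐ ω ∂P, 0 ≤ X ω)
    (hint : ∀ n : ℕ, Integrable (fun ω => X ω ^ n) P) {C : ℝ} (hC : 0 < C)
    (hmom : ∀ n : ℕ, P[fun ω => X ω ^ n] ≤ n ! * C ^ n) :
    0 ∈ interior (integrableExpSet X P) := by
  suffices Iio C⁻¹ ⊆ integrableExpSet X P from
    interior_mono this (by rw [interior_Iio]; exact inv_pos.2 hC)
  intro t ht
  rcases le_or_gt t 0 with ht0 | ht0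
  · refine (integrable_const 1).mono' (by fun_prop) ?_
    filter_upwards [hX0] with ω hω
    rw [norm_of_nonneg (exp_pos _).le, exp_le_one_iff]
    exact mul_nonpos_of_nonpos_of_nonneg ht0 hω
  · exact integrable_exp_mul_of_moment_le hX hX0 hint hC.le hmom ht0.le
      ((lt_inv_mul_iff₀' hC).1 (by rwa [mul_one]))

end Moments

theorem map_eq_map_of_moment_eq {Ω Ω' : Type*} [MeasurableSpace Ω] [MeasurableSpace Ω']
    {P : Measure Ω} {Q : Measure Ω'} [IsFiniteMeasure P] [IsFiniteMeasure Q]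
    {X : Ω → ℝ} {Y : Ω' → ℝ} (hX : AEMeasurable X P) (hY : AEMeasurable Y Q)
    (hX0 : 0 ∈ interior (integrableExpSet X P)) (hY0 : 0 ∈ interior (integrableExpSet Y Q))
    (hmom : ∀ n : ℕ, P[fun ω => X ω ^ n] = Q[fun ω => Y ω ^ n]) :
    P.map X = Q.map Y := by
  set S : Set ℂ :=
    Complex.re ⁻¹' (interior (integrableExpSet X P) ∩ interior (integrableExpSet Y Q))
  have hS0 : (0 : ℂ) ∈ S := ⟨hX0, hY0⟩
  have hSconn : IsPreconnected S :=
    ((convex_integrableExpSet.interior.inter convex_integrableExpSet.interior).linear_preimage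
      Complex.reLm).isPreconnected
  have hXan : AnalyticOnNhd ℂ (complexMGF X P) S :=
    analyticOnNhd_complexMGF.mono fun _ hz => hz.1
  have hYan : AnalyticOnNhd ℂ (complexMGF Y Q) S :=
    analyticOnNhd_complexMGF.mono fun _ hz => hz.2
  have hderiv (n : ℕ) :
      iteratedDeriv n (complexMGF X P) 0 = iteratedDeriv n (complexMGF Y Q) 0 := by
    rw [iteratedDeriv_complexMGF (by simpa using hX0),
      iteratedDeriv_complexMGF (by simpa using hY0)]
    simpa [← integral_complex_ofReal] using congrArg (fun x : ℝ => (x : ℂ)) (hmom n)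
  have hlocal : complexMGF X P =ᶠ[𝓝 0] complexMGF Y Q := by
    have h := (hXan 0 hS0).hasFPowerSeriesAt.sub (hYan 0 hS0).hasFPowerSeriesAt
    simp only [hderiv, sub_self] at h
    filter_upwards [h.eventually_eq_zero] with z hz
    exact sub_eq_zero.1 hz
  have heq := hXan.eqOn_of_preconnected_of_eventuallyEq hYan hSconn hS0 hlocal
  refine Measure.ext_of_charFun (funext fun t => ?_)
  rw [← complexMGF_mul_I hX, ← complexMGF_mul_I hY]
  exact heq (by simpa [S] using ⟨hX0, hY0⟩)

section Mellin

variable {Ω : Type*} [MeasurableSpace Ω] {P : Measure Ω} {X : Ω → ℝ} {c : ℝ → ℝ}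

lemma mellinT_one [IsProbabilityMeasure P] : mellinT P X 1 = 1 := by
  simp [mellinT]

lemma mellinT_natCast_add_one (n : ℕ) : mellinT P X (n + 1) = P[fun ω => X ω ^ n] := by
  simp [mellinT, rpow_natCast]

lemma mellinT_natCast_add_one_eq_prod [IsProbabilityMeasure P]
    (hrec : ∀ r > (0 : ℝ), mellinT P X (r + 1) = c r * mellinT P X r) (n : ℕ) :
    mellinT P X (n + 1) = ∏ k ∈ Finset.range n, c (k + 1) := by
  induction n with
  | zero => simpa using mellinT_one
  | succ n ih =>
    rw [Finset.prod_range_succ, Nat.cast_succ, hrec _ (by positivity), ih, mul_comm]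

lemma prod_range_le_factorial_mul_pow (hc : ∀ r > (0 : ℝ), 0 < c r) {C : ℝ}
    (hcC : ∀ s ≥ (1 : ℝ), c s ≤ C * s) (n : ℕ) :
    ∏ k ∈ Finset.range n, c (k + 1) ≤ n ! * C ^ n :=
  calc ∏ k ∈ Finset.range n, c (k + 1) ≤ ∏ k ∈ Finset.range n, (C * (k + 1)) :=
        Finset.prod_le_prod (fun k _ => (hc _ (by positivity)).le)
          fun k _ => hcC _ (by simp)
    _ = n ! * C ^ n := by
        rw [Finset.prod_mul_distrib, Finset.prod_const, Finset.card_range, mul_comm,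
          ← Finset.prod_range_add_one_eq_factorial]
        push_cast
        rfl

-- The integral of a non-integrable function is `0`, so a positive moment forces integrability.
lemma integrable_pow_of_mellinT_rec [IsProbabilityMeasure P] (hc : ∀ r > (0 : ℝ), 0 < c r)
    (hrec : ∀ r > (0 : ℝ), mellinT P X (r + 1) = c r * mellinT P X r) (n : ℕ) :
    Integrable (fun ω => X ω ^ n) P := by
  refine Integrable.of_integral_ne_zero (ne_of_gt ?_)
  rw [← mellinT_natCast_add_one, mellinT_natCast_add_one_eq_prod hrec]
  exact Finset.prod_pos fun k _ => hc _ (by positivity)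

lemma zero_mem_interior_integrableExpSet_of_mellinT_rec [IsProbabilityMeasure P]
    (hX : AEMeasurable X P) (hXpos : ∀ᵐ ω ∂P, 0 < X ω) (hc : ∀ r > (0 : ℝ), 0 < c r) {C : ℝ}
    (hcC : ∀ s ≥ (1 : ℝ), c s ≤ C * s)
    (hrec : ∀ r > (0 : ℝ), mellinT P X (r + 1) = c r * mellinT P X r) :
    0 ∈ interior (integrableExpSet X P) := by
  have hC : 0 < C := by simpa using (hc 1 one_pos).trans_le (hcC 1 le_rfl)
  refine zero_mem_interior_integrableExpSet_of_moment_le hX (hXpos.mono fun _ h => h.le)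
    (integrable_pow_of_mellinT_rec hc hrec) hC fun n => ?_
  rw [← mellinT_natCast_add_one, mellinT_natCast_add_one_eq_prod hrec]
  exact prod_range_le_factorial_mul_pow hc hcC n

end Mellin

theorem map_eq_map_of_mellinT_rec {Ω Ω' : Type*} [MeasurableSpace Ω] [MeasurableSpace Ω']
    {P : Measure Ω} {Q : Measure Ω'} [IsProbabilityMeasure P] [IsProbabilityMeasure Q]
    {X : Ω → ℝ} {Y : Ω' → ℝ} (hX : AEMeasurable X P) (hY : AEMeasurable Y Q)
    (hXpos : ∀ᵐ ω ∂P, 0 < X ω) (hYpos : ∀ᵐ ω ∂Q, 0 < Y ω)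
    {c : ℝ → ℝ} (hc : ∀ r > (0 : ℝ), 0 < c r) {C : ℝ} (hcC : ∀ s ≥ (1 : ℝ), c s ≤ C * s)
    (hXrec : ∀ r > (0 : ℝ), mellinT P X (r + 1) = c r * mellinT P X r)
    (hYrec : ∀ r > (0 : ℝ), mellinT Q Y (r + 1) = c r * mellinT Q Y r) :
    P.map X = Q.map Y :=
  map_eq_map_of_moment_eq hX hY
    (zero_mem_interior_integrableExpSet_of_mellinT_rec hX hXpos hc hcC hXrec)
    (zero_mem_interior_integrableExpSet_of_mellinT_rec hY hYpos hc hcC hYrec) fun n => by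
      rw [← mellinT_natCast_add_one, ← mellinT_natCast_add_one,
        mellinT_natCast_add_one_eq_prod hXrec, mellinT_natCast_add_one_eq_prod hYrec]

theorem symmetry_perpetuity_remainder_law_general
    (Φ Φs : ℝ → ℝ) (hΦ : IsBernstein Φ) (hΦne : ∃ s > (0 : ℝ), Φ s ≠ 0)
    (hΦs : IsBernstein Φs) (hstar : ∀ s > (0 : ℝ), Φs s = s / Φ s)
    {Ω : Type*} [MeasurableSpace Ω] (P : Measure Ω) [IsProbabilityMeasure P]
    {Ω' : Type*} [MeasurableSpace Ω'] (Q : Measure Ω') [IsProbabilityMeasure Q]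
    (IΦ RΦ : Ω → ℝ) (IΦs RΦs : Ω' → ℝ)
    (hIΦm : Measurable IΦ) (hRΦm : Measurable RΦ)
    (hIΦsm : Measurable IΦs) (hRΦsm : Measurable RΦs)
    (hIΦpos : ∀ᵐ ω ∂P, 0 < IΦ ω) (hRΦpos : ∀ᵐ ω ∂P, 0 < RΦ ω)
    (hIΦspos : ∀ᵐ ω ∂Q, 0 < IΦs ω) (hRΦspos : ∀ᵐ ω ∂Q, 0 < RΦs ω)
    -- Mellin characterization of the perpetuity associated to Φ
    (hIΦeq : ∀ r > (0 : ℝ), mellinT P IΦ (r + 1) = (r / Φ r) * mellinT P IΦ r)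
    -- Mellin characterization of the remainder associated to Φ
    (hRΦeq : ∀ r > (0 : ℝ), mellinT P RΦ (r + 1) = Φ r * mellinT P RΦ r)
    -- Mellin characterization of the perpetuity associated to Φ*
    (hIΦseq : ∀ r > (0 : ℝ), mellinT Q IΦs (r + 1) = (r / Φs r) * mellinT Q IΦs r)
    -- Mellin characterization of the remainder associated to Φ*
    (hRΦseq : ∀ r > (0 : ℝ), mellinT Q RΦs (r + 1) = Φs r * mellinT Q RΦs r) :
    Measure.map IΦ P = Measure.map RΦs Q ∧ Measure.map RΦ P = Measure.map IΦs Q := by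
  have hΦpos : ∀ r > (0 : ℝ), 0 < Φ r := fun r hr => hΦ.pos hΦne hr
  have hΦspos : ∀ r > (0 : ℝ), 0 < Φs r := fun r hr => by
    rw [hstar r hr]
    exact div_pos hr (hΦpos r hr)
  obtain ⟨C, hC⟩ := hΦ.exists_le_mul
  obtain ⟨Cs, hCs⟩ := hΦs.exists_le_mul
  constructor
  · refine map_eq_map_of_mellinT_rec hIΦm.aemeasurable hRΦsm.aemeasurable hIΦpos hRΦspos
      hΦspos hCs (fun r hr => ?_) hRΦseq
    rw [hIΦeq r hr, hstar r hr]
  · refine map_eq_map_of_mellinT_rec hRΦm.aemeasurable hIΦsm.aemeasurable hRΦpos hIΦspos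
      hΦpos hC hRΦeq fun r hr => ?_
    rw [hIΦseq r hr, hstar r hr, div_div_cancel₀ hr.ne']

/-- The symmetry case: if `Φ` and `Φ*(s) = s/Φ(s)` are conjugate Bernstein functions,
then `I_Φ =law= R_{Φ*}` and `R_Φ =law= I_{Φ*}`. The perpetuity (resp. remainder)
associated to a Bernstein function `Ψ` is characterized as the positive random variable
whose Mellin transform is the unique log-convex function equal to `1` at `1` and
satisfying `g(r+1) = (r/Ψ(r)) g(r)` (resp. `f(r+1) = Ψ(r) f(r)`). -/
theorem symmetry_perpetuity_remainder_law
    (Φ Φs : ℝ → ℝ) (hΦ : IsBernstein Φ) (hΦne : ∃ s > (0 : ℝ), Φ s ≠ 0)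
    (hΦs : IsBernstein Φs) (hstar : ∀ s > (0 : ℝ), Φs s = s / Φ s)
    {Ω : Type*} [MeasurableSpace Ω] (P : Measure Ω) [IsProbabilityMeasure P]
    {Ω' : Type*} [MeasurableSpace Ω'] (Q : Measure Ω') [IsProbabilityMeasure Q]
    (IΦ RΦ : Ω → ℝ) (IΦs RΦs : Ω' → ℝ)
    (hIΦm : Measurable IΦ) (hRΦm : Measurable RΦ)
    (hIΦsm : Measurable IΦs) (hRΦsm : Measurable RΦs)
    (hIΦpos : ∀ᵐ ω ∂P, 0 < IΦ ω) (hRΦpos : ∀ᵐ ω ∂P, 0 < RΦ ω)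
    (hIΦspos : ∀ᵐ ω ∂Q, 0 < IΦs ω) (hRΦspos : ∀ᵐ ω ∂Q, 0 < RΦs ω)
    -- Mellin characterization of the perpetuity associated to Φ
    (hIΦeq : ∀ r > (0 : ℝ), mellinT P IΦ (r + 1) = (r / Φ r) * mellinT P IΦ r)
    (hIΦconv : ConvexOn ℝ (Ioi 0) (fun r => Real.log (mellinT P IΦ r)))
    -- Mellin characterization of the remainder associated to Φ
    (hRΦeq : ∀ r > (0 : ℝ), mellinT P RΦ (r + 1) = Φ r * mellinT P RΦ r)
    (hRΦconv : ConvexOn ℝ (Ioi 0) (fun r => Real.log (mellinT P RΦ r)))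
    -- Mellin characterization of the perpetuity associated to Φ*
    (hIΦseq : ∀ r > (0 : ℝ), mellinT Q IΦs (r + 1) = (r / Φs r) * mellinT Q IΦs r)
    (hIΦsconv : ConvexOn ℝ (Ioi 0) (fun r => Real.log (mellinT Q IΦs r)))
    -- Mellin characterization of the remainder associated to Φ*
    (hRΦseq : ∀ r > (0 : ℝ), mellinT Q RΦs (r + 1) = Φs r * mellinT Q RΦs r)
    (hRΦsconv : ConvexOn ℝ (Ioi 0) (fun r => Real.log (mellinT Q RΦs r))) :
    Measure.map IΦ P = Measure.map RΦs Q ∧ Measure.map RΦ P = Measure.map IΦs Q :=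
  symmetry_perpetuity_remainder_law_general Φ Φs hΦ hΦne hΦs hstar P Q IΦ RΦ IΦs RΦs hIΦm hRΦm hIΦsm
    hRΦsm hIΦpos hRΦpos hIΦspos hRΦspos hIΦeq hRΦeq hIΦseq hRΦseq
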